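/- arXiv:2605.29936 — 3 statements merged into one kernel-verified Lean document; each statement's English description precedes it below -/
import Mathlib

section
/- Let m ≥ 1 and k ≥ 1, and set n = m(m−1)/2 + k. Then the number γ_{n,m} of compositions of n having mex m satisfies, as an equality of rational numbers, γ_{n,m} = Σ (m − 1 + α_1 + ⋯ + α_k)! / ∏_{i=1}^{k} d_i, where the sum ranges over all tuples (α_1, ..., α_k) of nonnegative integers with α_1 + 2α_2 + ⋯ + kα_k = k and with α_m = 0 (this last condition applying only when m ≤ k), and where d_i = (α_i + 1)! if i ≤ m − 1, d_i = 1 if i = m, and d_i = α_i! if i ≥ m + 1. -/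
/-!
The parts of a composition of `m(m-1)/2 + k` with mex `m` form the multiset `{1, …, m-1} + T`,
where `T` has sum `k` and avoids `m`. Recording the multiplicity `α_i` of each `i` in `T` matches
these multisets with the tuples `α` of the statement, and the compositions with a given multiset of
parts are its orderings, counted by the multinomial coefficient `(∑ c_j)! / ∏ c_j!` of its
multiplicities `c_j`: here `c_i = α_i + 1` for `i < m`, `c_m = 0` and `c_i = α_i` for `i > m`.
-/

/-- The mex of a composition: the smallest positive integer that is not a part. -/
noncomputable def Composition.mex {n : ℕ} (c : Composition n) : ℕ :=
  sInf {k : ℕ | 0 < k ∧ k ∉ c.blocks}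

open Finset Multiset
open scoped Nat

theorem Composition.mex_eq_iff {n m : ℕ} (c : Composition n) (hm : 0 < m) :
    c.mex = m ↔ m ∉ c.blocks ∧ ∀ j, 0 < j → j < m → j ∈ c.blocks := by
  have hne : {j | 0 < j ∧ j ∉ c.blocks}.Nonempty :=
    ⟨n + 1, n.succ_pos, fun h => by have := c.blocks_le h; omega⟩
  constructor
  · rintro rfl
    refine ⟨(Nat.sInf_mem hne).2, fun j hj hjm => by_contra fun h => ?_⟩
    exact (Nat.sInf_le (show j ∈ {j | 0 < j ∧ j ∉ c.blocks} from ⟨hj, h⟩)).not_gt hjm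
  · rintro ⟨hmc, hlow⟩
    exact le_antisymm (Nat.sInf_le ⟨hm, hmc⟩)
      (le_csInf hne fun j hj => not_lt.1 fun hjm => hj.2 (hlow j hj.1 hjm))

namespace Multiset

variable {α : Type*} [DecidableEq α]

noncomputable def arrangements (s : Multiset α) : Finset (List α) :=
  s.toList.permutations.toFinset

theorem mem_arrangements {s : Multiset α} {l : List α} :
    l ∈ s.arrangements ↔ (l : Multiset α) = s := by
  simp [arrangements, List.mem_permutations, ← Multiset.coe_eq_coe]

theorem disjoint_arrangements {s t : Multiset α} (h : s ≠ t) :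
    Disjoint s.arrangements t.arrangements :=
  Finset.disjoint_left.2 fun _ hs ht =>
    h ((mem_arrangements.1 hs).symm.trans (mem_arrangements.1 ht))

theorem arrangements_eq_biUnion {s : Multiset α} (hs : s ≠ 0) :
    s.arrangements = s.toFinset.biUnion fun a => (s.erase a).arrangements.image (a :: ·) := by
  ext l
  simp only [mem_arrangements, Finset.mem_biUnion, Finset.mem_image, Multiset.mem_toFinset]
  constructor
  · rintro rfl
    cases l with
    | nil => exact absurd rfl hs
    | cons a t => exact ⟨a, by simp, t, by simp, rfl⟩
  · rintro ⟨a, ha, t, ht, rfl⟩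
    rw [← Multiset.cons_coe, ht, Multiset.cons_erase ha]

theorem card_arrangements_eq_sum {s : Multiset α} (hs : s ≠ 0) :
    #s.arrangements = ∑ a ∈ s.toFinset, #(s.erase a).arrangements := by
  rw [arrangements_eq_biUnion hs, card_biUnion]
  · exact Finset.sum_congr rfl fun a _ => card_image_of_injective _ List.cons_injective
  · intro a _ b _ hab
    simp only [Function.onFun, Finset.disjoint_left, Finset.mem_image]
    rintro _ ⟨t, _, rfl⟩ ⟨t', _, h⟩
    exact hab (List.cons_eq_cons.1 h).1.symm

theorem prod_factorial_count_eq_count_mul {s : Multiset α} {t : Finset α} {a : α}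
    (hat : a ∈ t) (has : a ∈ s) :
    ∏ b ∈ t, (s.count b)! = s.count a * ∏ b ∈ t, ((s.erase a).count b)! := by
  rw [← Finset.mul_prod_erase t _ hat, ← Finset.mul_prod_erase t _ hat, count_erase_self,
    ← mul_assoc, Nat.mul_factorial_pred (count_ne_zero.2 has)]
  congr 1
  exact Finset.prod_congr rfl fun b hb => by rw [count_erase_of_ne (Finset.ne_of_mem_erase hb)]

theorem prod_factorial_count_mul_card_arrangements (s : Multiset α) {t : Finset α}
    (hst : s.toFinset ⊆ t) : (∏ a ∈ t, (s.count a)!) * #s.arrangements = (card s)! := by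
  induction s using Multiset.strongInductionOn with
  | ih s ih =>
  rcases eq_or_ne s 0 with rfl | hs
  · simp [arrangements]
  rw [card_arrangements_eq_sum hs, Finset.mul_sum]
  calc ∑ a ∈ s.toFinset, (∏ b ∈ t, (s.count b)!) * #(s.erase a).arrangements
      = ∑ a ∈ s.toFinset, s.count a * (card s - 1)! := by
        refine Finset.sum_congr rfl fun a ha => ?_
        have has := Multiset.mem_toFinset.1 ha
        have hsub : (s.erase a).toFinset ⊆ t := fun b hb =>
          hst (Multiset.mem_toFinset.2 (mem_of_mem_erase (Multiset.mem_toFinset.1 hb)))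
        rw [prod_factorial_count_eq_count_mul (hst ha) has, mul_assoc,
          ih _ (erase_lt.2 has) hsub, card_erase_of_mem has, Nat.pred_eq_sub_one]
    _ = (card s)! := by
      rw [← Finset.sum_mul, toFinset_sum_count_eq,
        Nat.mul_factorial_pred (card_pos.2 hs).ne']

end Multiset

section MexParts

variable {m k : ℕ}

def withMultiplicities (α : Fin k → ℕ) : Multiset ℕ :=
  ∑ i, replicate (α i) ((i : ℕ) + 1)

theorem count_withMultiplicities (α : Fin k → ℕ) (i : Fin k) :
    (withMultiplicities α).count ((i : ℕ) + 1) = α i := by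
  simp [withMultiplicities, count_sum', count_replicate, Fin.val_inj]

theorem mem_withMultiplicities {α : Fin k → ℕ} {j : ℕ} :
    j ∈ withMultiplicities α ↔ ∃ i, α i ≠ 0 ∧ j = (i : ℕ) + 1 := by
  simp [withMultiplicities, Multiset.mem_sum, Multiset.mem_replicate]

theorem sum_withMultiplicities (α : Fin k → ℕ) :
    (withMultiplicities α).sum = ∑ i : Fin k, ((i : ℕ) + 1) * α i := by
  simp [withMultiplicities, Multiset.sum_sum, mul_comm]

theorem card_withMultiplicities (α : Fin k → ℕ) :
    card (withMultiplicities α) = ∑ i : Fin k, α i := by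
  simp [withMultiplicities, Multiset.card_sum]

theorem withMultiplicities_injective : Function.Injective (withMultiplicities (k := k)) :=
  fun α β h => funext fun i => by
    rw [← count_withMultiplicities α, ← count_withMultiplicities β, h]

theorem eq_withMultiplicities_count {T : Multiset ℕ} (hT : ∀ j ∈ T, 0 < j ∧ j ≤ k) :
    T = withMultiplicities fun i : Fin k => T.count ((i : ℕ) + 1) := by
  ext j
  by_cases hj : 0 < j ∧ j ≤ k
  · obtain ⟨i, rfl⟩ : ∃ i : Fin k, (i : ℕ) + 1 = j :=
      ⟨⟨j - 1, by omega⟩, by simp only; omega⟩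
    rw [count_withMultiplicities]
  · rw [count_eq_zero.2 fun h => hj (hT j h), count_eq_zero.2]
    rw [mem_withMultiplicities]
    rintro ⟨i, -, rfl⟩
    exact hj ⟨by omega, i.isLt⟩

variable (m) in
def mexMultiset (α : Fin k → ℕ) : Multiset ℕ :=
  Multiset.Ico 1 m + withMultiplicities α

variable (m k) in
def mexMultiplicities : Finset (Fin k → ℕ) :=
  (Fintype.piFinset fun _ => Finset.range (k + 1)).filter fun α =>
    (∑ i : Fin k, ((i : ℕ) + 1) * α i = k) ∧ ∀ i : Fin k, (i : ℕ) + 1 = m → α i = 0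

theorem mem_mexMultiplicities {α : Fin k → ℕ} :
    α ∈ mexMultiplicities m k ↔
      (∑ i : Fin k, ((i : ℕ) + 1) * α i = k) ∧
        ∀ i : Fin k, (i : ℕ) + 1 = m → α i = 0 := by
  refine Finset.mem_filter.trans (and_iff_right_of_imp fun hα => ?_)
  refine Fintype.mem_piFinset.2 fun i => Finset.mem_range.2 ?_
  have := Finset.single_le_sum (fun (i : Fin k) _ => Nat.zero_le (((i : ℕ) + 1) * α i))
    (Finset.mem_univ i)
  nlinarith [hα.1]

theorem sum_Ico_one_eq_choose_two (m : ℕ) : (Multiset.Ico 1 m).sum = m.choose 2 := by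
  rw [Multiset.Ico, Finset.sum_val]
  rcases Nat.eq_zero_or_pos m with rfl | hm
  · simp
  · rw [Nat.choose_two_right, ← Finset.sum_range_id, Finset.range_eq_Ico,
      Finset.sum_eq_sum_Ico_succ_bot hm]
    simp

theorem count_mexMultiset (α : Fin k → ℕ) (j : ℕ) :
    (mexMultiset m α).count j =
      (if 1 ≤ j ∧ j < m then 1 else 0) + (withMultiplicities α).count j := by
  rw [mexMultiset, count_add, count_eq_of_nodup nodup_Ico]
  simp only [Multiset.mem_Ico]

theorem card_mexMultiset (α : Fin k → ℕ) :
    card (mexMultiset m α) = m - 1 + ∑ i : Fin k, α i := by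
  rw [mexMultiset, card_add, Multiset.Ico, Finset.card_val, Nat.card_Ico, card_withMultiplicities]

theorem mexMultiset_injective : Function.Injective (mexMultiset (k := k) m) :=
  (add_right_injective _).comp withMultiplicities_injective

theorem exists_mexMultiset_eq_iff {S : Multiset ℕ} :
    (∃ α ∈ mexMultiplicities m k, mexMultiset m α = S) ↔
      0 ∉ S ∧ m ∉ S ∧ (∀ j, 0 < j → j < m → j ∈ S) ∧ S.sum = m.choose 2 + k := by
  constructor
  · rintro ⟨α, hα, rfl⟩
    obtain ⟨hsum, hαm⟩ := mem_mexMultiplicities.1 hα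
    simp only [mexMultiset, Multiset.mem_add, Multiset.mem_Ico, mem_withMultiplicities, sum_add]
    refine ⟨?_, ?_, fun j hj hjm => Or.inl ⟨hj, hjm⟩, ?_⟩
    · rintro (h | ⟨i, -, h⟩) <;> omega
    · rintro (h | ⟨i, hi, h⟩)
      · omega
      · exact hi (hαm i h.symm)
    · rw [sum_Ico_one_eq_choose_two, sum_withMultiplicities, hsum]
  · rintro ⟨h0, hm, hlow, hsum⟩
    have hle : Multiset.Ico 1 m ≤ S := (le_iff_subset nodup_Ico).2 fun j hj => by
      rw [Multiset.mem_Ico] at hj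
      exact hlow j hj.1 hj.2
    obtain ⟨T, rfl⟩ := Multiset.le_iff_exists_add.1 hle
    have hTsum : T.sum = k := by
      rw [sum_add, sum_Ico_one_eq_choose_two] at hsum
      omega
    have hT : ∀ j ∈ T, 0 < j ∧ j ≤ k := fun j hj =>
      ⟨Nat.pos_of_ne_zero fun h => h0 (mem_add.2 (Or.inr (h ▸ hj))),
        hTsum ▸ le_sum_of_mem hj⟩
    have hTeq := eq_withMultiplicities_count hT
    refine ⟨_, mem_mexMultiplicities.2 ⟨?_, fun i hi => ?_⟩, by rw [mexMultiset, ← hTeq]⟩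
    · rw [← sum_withMultiplicities, ← hTeq, hTsum]
    · rw [hi]
      exact count_eq_zero.2 fun h => hm (mem_add.2 (Or.inr h))

theorem prod_factorial_mul_card_arrangements_mexMultiset {α : Fin k → ℕ}
    (hα : ∀ i : Fin k, (i : ℕ) + 1 = m → α i = 0) :
    (∏ i : Fin k, if (i : ℕ) + 1 ≤ m - 1 then (α i + 1)!
      else if (i : ℕ) + 1 = m then 1 else (α i)!) * #(mexMultiset m α).arrangements =
      (m - 1 + ∑ i : Fin k, α i)! := by
  set t := (Finset.univ.image fun i : Fin k => (i : ℕ) + 1) ∪ Finset.Ico 1 m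
  have hsupp : (mexMultiset m α).toFinset ⊆ t := fun j hj => by
    simp only [Multiset.mem_toFinset, mexMultiset, Multiset.mem_add, Multiset.mem_Ico,
      mem_withMultiplicities] at hj
    simp only [t, Finset.mem_union, Finset.mem_image, Finset.mem_univ, true_and, Finset.mem_Ico]
    rcases hj with hj | ⟨i, -, rfl⟩
    · exact Or.inr hj
    · exact Or.inl ⟨i, rfl⟩
  rw [← card_mexMultiset, ← prod_factorial_count_mul_card_arrangements _ hsupp]
  congr 1
  rw [← Finset.prod_subset Finset.subset_union_left, Finset.prod_image]
  · refine Finset.prod_congr rfl fun i _ => ?_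
    rw [count_mexMultiset, count_withMultiplicities]
    by_cases h1 : (i : ℕ) + 1 ≤ m - 1
    · rw [if_pos h1, if_pos (by omega), add_comm]
    by_cases h2 : (i : ℕ) + 1 = m
    · rw [if_neg h1, if_pos h2, if_neg (by omega), hα i h2]
      rfl
    · rw [if_neg h1, if_neg h2, if_neg (by omega), zero_add]
  · exact fun i _ j _ h => Fin.ext (by simpa using h)
  · intro j hj hji
    have hjw : j ∉ withMultiplicities α := fun h => by
      obtain ⟨i, -, rfl⟩ := mem_withMultiplicities.1 h
      exact hji (Finset.mem_image_of_mem _ (Finset.mem_univ i))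
    have hjm : 1 ≤ j ∧ j < m := by
      simpa [t, hji] using hj
    rw [count_mexMultiset, if_pos hjm, count_eq_zero.2 hjw]
    rfl

theorem card_compositions_mex_eq {n : ℕ} (hm : 0 < m) (hn : n = m.choose 2 + k) :
    Nat.card {c : Composition n // c.mex = m} =
      ∑ α ∈ mexMultiplicities m k, #(mexMultiset m α).arrangements := by
  set B := (mexMultiplicities m k).biUnion fun α => (mexMultiset m α).arrangements
  have hB (l : List ℕ) :
      l ∈ B ↔ 0 ∉ l ∧ m ∉ l ∧ (∀ j, 0 < j → j < m → j ∈ l) ∧ l.sum = n := by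
    simp only [B, Finset.mem_biUnion, mem_arrangements, eq_comm (a := (l : Multiset ℕ))]
    rw [exists_mexMultiset_eq_iff]
    simp [hn]
  rw [← card_biUnion fun α _ β _ h => disjoint_arrangements (mexMultiset_injective.ne h),
    ← Nat.card_eq_finsetCard]
  refine Nat.card_congr
    { toFun := fun c => ⟨c.1.blocks, (hB _).2 ?_⟩
      invFun := fun l => ⟨⟨l.1, ?_, ?_⟩, ?_⟩
      left_inv := fun _ => rfl
      right_inv := fun _ => rfl }
  · obtain ⟨hmc, hlow⟩ := (c.1.mex_eq_iff hm).1 c.2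
    exact ⟨fun h => (c.1.blocks_pos h).ne' rfl, hmc, hlow, c.1.blocks_sum⟩
  · exact fun {j} hj => Nat.pos_of_ne_zero fun h => ((hB _).1 l.2).1 (h ▸ hj)
  · exact ((hB _).1 l.2).2.2.2
  · obtain ⟨-, hmc, hlow, -⟩ := (hB _).1 l.2
    exact (Composition.mex_eq_iff _ hm).2 ⟨hmc, hlow⟩

end MexParts

theorem stmt_9_general (m k : ℕ) (hm : 1 ≤ m) (n : ℕ) (hn : n = m.choose 2 + k) :
    ((Nat.card {c : Composition n // c.mex = m} : ℚ)) =
      ∑ᶠ (α : Fin k → ℕ)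
        (_ : (∑ i : Fin k, ((i : ℕ) + 1) * α i = k) ∧
             (∀ i : Fin k, (i : ℕ) + 1 = m → α i = 0)),
        (Nat.factorial (m - 1 + ∑ i : Fin k, α i) : ℚ) /
          ∏ i : Fin k,
            (if (i : ℕ) + 1 ≤ m - 1 then (Nat.factorial (α i + 1) : ℚ)
             else if (i : ℕ) + 1 = m then 1
             else (Nat.factorial (α i) : ℚ)) := by
  rw [card_compositions_mex_eq hm hn,
    finsum_cond_eq_sum_of_cond_iff _ fun _ => mem_mexMultiplicities.symm]
  push_cast
  refine Finset.sum_congr rfl fun α hα => ?_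
  have h := prod_factorial_mul_card_arrangements_mexMultiset (mem_mexMultiplicities.1 hα).2
  rw [eq_div_iff, mul_comm]
  · exact_mod_cast h
  · exact_mod_cast left_ne_zero_of_mul (h ▸ Nat.factorial_ne_zero _)

/-- for `m, k ≥ 1` and `n = m(m−1)/2 + k`, the number of compositions of `n`
with mex `m` equals the sum, over all tuples `(α_1, …, α_k)` of nonnegative integers with
`α_1 + 2α_2 + ⋯ + kα_k = k` and `α_m = 0` (the latter applying only when `m ≤ k`), of
`(m − 1 + α_1 + ⋯ + α_k)! / ∏_{i=1}^k d_i`, where `d_i = (α_i + 1)!` for `i ≤ m − 1`,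
`d_i = 1` for `i = m` and `d_i = α_i!` for `i ≥ m + 1`.
Here the tuple `(α_1, …, α_k)` is encoded as `α : Fin k → ℕ` with `α i` standing for
`α_{i+1}`, and the sum over all such tuples is expressed as a `finsum`. -/
theorem stmt_9 (m k : ℕ) (hm : 1 ≤ m) (hk : 1 ≤ k) (n : ℕ) (hn : n = m.choose 2 + k) :
    ((Nat.card {c : Composition n // c.mex = m} : ℚ)) =
      ∑ᶠ (α : Fin k → ℕ)
        (_ : (∑ i : Fin k, ((i : ℕ) + 1) * α i = k) ∧
             (∀ i : Fin k, (i : ℕ) + 1 = m → α i = 0)),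
        (Nat.factorial (m - 1 + ∑ i : Fin k, α i) : ℚ) /
          ∏ i : Fin k,
            (if (i : ℕ) + 1 ≤ m - 1 then (Nat.factorial (α i + 1) : ℚ)
             else if (i : ℕ) + 1 = m then 1
             else (Nat.factorial (α i) : ℚ)) :=
  stmt_9_general m k hm n hn
end

section
/- Let m, k, n be positive integers with k ≤ m ≤ n. Then Σ_{T} N_T(n) = (m − k + 1) · S(m, m − k + 1) · (n − k)!, where the sum ranges over all subsets T of {1, ..., m} with |T| = k and m ∈ T, and N_T(n) denotes the number of inversion sequences (x_1, ..., x_n) of size n such that x_i ∉ T for all i. -/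
/-!
An inversion sequence avoiding `T` picks each `x_i` independently from `{0, …, i-1} \ T`, so
`N_T(n) = ∏_{i<n} #({0, …, i} \ T)`. For `T ⊆ {1, …, m}` with `m ∈ T` and `#T = k`, the factors
with `i ≥ m` are `i + 1 - k` and contribute `(n - k)! / (m - k)!`, while the first `m` factors do
not see `m`. It remains to sum `∏_{i ≤ p} #({0, …, i} \ S)` over `S ⊆ {1, …, p}` with
`#S = c`; splitting on whether the largest value `p` lies in `S` shows that this sum satisfies
the recurrence of `(p + 1 - c)! * S(p + 1, p + 1 - c)`, which is the Stirling recurrence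
`S(n + 1, j + 1) = (j + 1) S(n, j + 1) + S(n, j)` multiplied by `(j + 1)!`.

The combinatorial `S(n, k)` satisfies that recurrence because a partition of `insert x s` into
`k + 1` parts arises from a unique partition of `s`, either by adding `{x}` as a new part or by
putting `x` into one of `k + 1` existing parts.
-/

/-- The Stirling number of the second kind `S(n,k)`: the number of partitions of an
`n`-element set into exactly `k` nonempty blocks. -/
noncomputable def stirlingSecond (n k : ℕ) : ℕ :=
  Nat.card {P : Finpartition (Finset.univ : Finset (Fin n)) // P.parts.card = k}

open Finset
open scoped Nat

namespace Finset

variable {α : Type*} [DecidableEq α] {x : α} {s : Finset α}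

theorem insert_ne_singleton {b : Finset α} (hxb : x ∉ b) (hb : b.Nonempty) :
    insert x b ≠ {x} := by
  obtain ⟨y, hy⟩ := hb
  intro h
  have hyx : y = x := mem_singleton.1 (h ▸ mem_insert_of_mem hy)
  exact hxb (hyx ▸ hy)

theorem sum_image_insert_powersetCard {β : Type*} [AddCommMonoid β] (hx : x ∉ s) (n : ℕ)
    (f : Finset α → β) :
    ∑ t ∈ (s.powersetCard n).image (insert x), f t = ∑ t ∈ s.powersetCard n, f (insert x t) := by
  have hnotin {t} (ht : t ∈ s.powersetCard n) : x ∉ t := fun h => hx ((mem_powersetCard.1 ht).1 h)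
  refine sum_image fun t₁ ht₁ t₂ ht₂ h => ?_
  rw [← erase_insert (hnotin ht₁), h, erase_insert (hnotin ht₂)]

theorem sum_powersetCard_succ_insert {β : Type*} [AddCommMonoid β] (hx : x ∉ s) (n : ℕ)
    (f : Finset α → β) :
    ∑ t ∈ (insert x s).powersetCard (n + 1), f t =
      ∑ t ∈ s.powersetCard (n + 1), f t + ∑ t ∈ s.powersetCard n, f (insert x t) := by
  rw [powersetCard_succ_insert hx, sum_union, sum_image_insert_powersetCard hx]
  simp only [disjoint_left, mem_image]
  rintro _ ht ⟨t, -, rfl⟩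
  exact hx ((mem_powersetCard.1 ht).1 (mem_insert_self x t))

theorem filter_powerset_insert_card_mem (hx : x ∉ s) (n : ℕ) :
    (insert x s).powerset.filter (fun t => #t = n + 1 ∧ x ∈ t) =
      (s.powersetCard n).image (insert x) := by
  rw [← filter_filter, ← powersetCard_eq_filter, powersetCard_succ_insert hx, filter_union,
    filter_false_of_mem, filter_true_of_mem, empty_union]
  · simp only [mem_image]
    rintro _ ⟨t, -, rfl⟩
    exact mem_insert_self x t
  · exact fun t ht hxt => hx ((mem_powersetCard.1 ht).1 hxt)

theorem Icc_one_subset_range (p : ℕ) : Icc 1 p ⊆ range (p + 1) :=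
  fun _ ht => mem_range.2 (Nat.lt_succ_of_le (mem_Icc.1 ht).2)

end Finset

namespace Finpartition

section GeneralizedBooleanAlgebra

variable {α : Type*} [GeneralizedBooleanAlgebra α] [DecidableEq α] {a b c : α}

theorem avoid_parts_of_le_of_mem (P : Finpartition a) (hb : b ∈ P.parts) (hcb : c ≤ b) :
    (P.avoid c).parts = (insert (b \ c) (P.parts.erase b)).erase ⊥ := by
  ext e
  simp only [mem_avoid, mem_erase, mem_insert]
  constructor
  · rintro ⟨d, hd, hdc, rfl⟩
    refine ⟨fun h => hdc (sdiff_eq_bot_iff.1 h), ?_⟩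
    by_cases hdb : d = b
    · exact Or.inl (hdb ▸ rfl)
    · have hdc : Disjoint d c := (P.disjoint hd hb hdb).mono_right hcb
      rw [hdc.sdiff_eq_left]
      exact Or.inr ⟨hdb, hd⟩
  · rintro ⟨hne, rfl | ⟨heb, he⟩⟩
    · exact ⟨b, hb, fun h => hne (sdiff_eq_bot_iff.2 h), rfl⟩
    · have hec : Disjoint e c := (P.disjoint he hb heb).mono_right hcb
      exact ⟨e, he, fun h => hne (hec.eq_bot_of_le h), hec.sdiff_eq_left⟩

theorem avoid_parts_of_mem (P : Finpartition a) (hb : b ∈ P.parts) :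
    (P.avoid b).parts = P.parts.erase b := by
  rw [avoid_parts_of_le_of_mem P hb le_rfl, sdiff_self, erase_insert]
  exact fun h => P.bot_notMem (mem_of_mem_erase h)

end GeneralizedBooleanAlgebra

variable {α : Type*} [DecidableEq α] {s b : Finset α} {x : α}

theorem avoid_singleton_parts (P : Finpartition s) (hb : b ∈ P.parts) (hxb : x ∈ b)
    (hne : b ≠ {x}) : (P.avoid {x}).parts = insert (b.erase x) (P.parts.erase b) := by
  rw [avoid_parts_of_le_of_mem P hb (singleton_subset_iff.2 hxb), sdiff_singleton_eq_erase,
    erase_eq_of_notMem]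
  intro h
  rcases mem_insert.1 h with h | h
  · exact hne (by rw [← insert_erase hxb, ← h, bot_eq_empty, insert_empty])
  · exact P.bot_notMem (mem_of_mem_erase h)

def insertSingleton (Q : Finpartition s) (hx : x ∉ s) : Finpartition (insert x s) :=
  Q.extend (singleton_ne_empty x) (disjoint_singleton_right.2 hx)
    (by rw [sup_eq_union, union_comm, ← insert_eq])

theorem insertSingleton_parts (Q : Finpartition s) (hx : x ∉ s) :
    (Q.insertSingleton hx).parts = insert {x} Q.parts := rfl

def insertIntoPart (Q : Finpartition s) (hx : x ∉ s) (hb : b ∈ Q.parts) :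
    Finpartition (insert x s) :=
  (Q.avoid b).extend (insert_ne_empty x b)
    (disjoint_insert_right.2 ⟨fun h => hx (mem_sdiff.1 h).1, sdiff_disjoint⟩)
    (by rw [sup_eq_union, union_insert, sdiff_union_of_subset (Q.le hb)])

theorem insertIntoPart_parts (Q : Finpartition s) (hx : x ∉ s) (hb : b ∈ Q.parts) :
    (Q.insertIntoPart hx hb).parts = insert (insert x b) (Q.parts.erase b) := by
  rw [insertIntoPart, extend_parts, avoid_parts_of_mem Q hb]

theorem card_insertIntoPart (Q : Finpartition s) (hx : x ∉ s) (hb : b ∈ Q.parts) :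
    #(Q.insertIntoPart hx hb).parts = #Q.parts := by
  rw [insertIntoPart, card_extend, avoid_parts_of_mem Q hb, card_erase_add_one hb]

def eraseElem (P : Finpartition (insert x s)) (hx : x ∉ s) : Finpartition s :=
  (P.avoid {x}).copy (by rw [sdiff_singleton_eq_erase, erase_insert hx])

theorem eraseElem_parts (P : Finpartition (insert x s)) (hx : x ∉ s) :
    (P.eraseElem hx).parts = (P.avoid {x}).parts := rfl

theorem eraseElem_insertSingleton (Q : Finpartition s) (hx : x ∉ s) :
    (Q.insertSingleton hx).eraseElem hx = Q := by
  ext1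
  rw [eraseElem_parts, avoid_parts_of_mem _ (mem_insert_self _ _), insertSingleton_parts,
    erase_insert (fun h => hx (Q.le h (mem_singleton_self x)))]

theorem eraseElem_insertIntoPart (Q : Finpartition s) (hx : x ∉ s) (hb : b ∈ Q.parts) :
    (Q.insertIntoPart hx hb).eraseElem hx = Q := by
  have hxb : x ∉ b := fun h => hx (Q.le hb h)
  ext1
  rw [eraseElem_parts, avoid_singleton_parts _ (insertIntoPart_parts Q hx hb ▸ mem_insert_self _ _)
    (mem_insert_self x b) (insert_ne_singleton hxb (Q.nonempty_of_mem_parts hb)),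
    insertIntoPart_parts, erase_insert hxb, erase_insert, insert_erase hb]
  exact fun h => hx (Q.le (mem_of_mem_erase h) (mem_insert_self x b))

theorem part_insertSingleton (Q : Finpartition s) (hx : x ∉ s) :
    (Q.insertSingleton hx).part x = {x} :=
  part_eq_of_mem _ (mem_insert_self _ _) (mem_singleton_self x)

theorem part_insertIntoPart (Q : Finpartition s) (hx : x ∉ s) (hb : b ∈ Q.parts) :
    (Q.insertIntoPart hx hb).part x = insert x b :=
  part_eq_of_mem _ (insertIntoPart_parts Q hx hb ▸ mem_insert_self _ _) (mem_insert_self x b)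

variable (x) in
def insertElem (hx : x ∉ s) (k : ℕ) :
    {Q : Finpartition s // #Q.parts = k} ⊕
        (Σ Q : {Q : Finpartition s // #Q.parts = k + 1}, Q.1.parts) →
      {P : Finpartition (insert x s) // #P.parts = k + 1}
  | .inl Q => ⟨Q.1.insertSingleton hx, by rw [insertSingleton, card_extend, Q.2]⟩
  | .inr ⟨Q, b⟩ => ⟨Q.1.insertIntoPart hx b.2, by rw [card_insertIntoPart, Q.2]⟩

theorem insertElem_injective (hx : x ∉ s) (k : ℕ) : Function.Injective (insertElem x hx k) := by
  have hxb {Q : Finpartition s} {b} (hb : b ∈ Q.parts) : x ∉ b := fun h => hx (Q.le hb h)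
  have hne {Q : Finpartition s} {b} (hb : b ∈ Q.parts) : insert x b ≠ {x} :=
    insert_ne_singleton (hxb hb) (Q.nonempty_of_mem_parts hb)
  rintro (⟨Q₁, h₁⟩ | ⟨⟨Q₁, h₁⟩, b₁, hb₁⟩) (⟨Q₂, h₂⟩ | ⟨⟨Q₂, h₂⟩, b₂, hb₂⟩) h <;>
    have hQ := congrArg (fun P => P.1.eraseElem hx) h <;>
    have hpart := congrArg (fun P => P.1.part x) h <;>
    simp only [insertElem, eraseElem_insertSingleton, eraseElem_insertIntoPart,
      part_insertSingleton, part_insertIntoPart] at hQ hpart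
  · subst hQ; rfl
  · exact absurd hpart.symm (hne hb₂)
  · exact absurd hpart (hne hb₁)
  · subst hQ
    obtain rfl : b₁ = b₂ := by
      rw [← erase_insert (hxb hb₁), hpart, erase_insert (hxb hb₂)]
    rfl

theorem insertElem_surjective (hx : x ∉ s) (k : ℕ) : Function.Surjective (insertElem x hx k) := by
  rintro ⟨P, hP⟩
  have ht : P.part x ∈ P.parts := P.part_mem.2 (mem_insert_self x s)
  have hxt : x ∈ P.part x := P.mem_part_self.2 (mem_insert_self x s)
  by_cases hsingle : P.part x = {x}
  · have hQ : (P.eraseElem hx).parts = P.parts.erase {x} := by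
      rw [eraseElem_parts, ← hsingle, avoid_parts_of_mem P ht]
    have hP' : (P.eraseElem hx).insertSingleton hx = P := by
      ext1
      rw [insertSingleton_parts, hQ, insert_erase (hsingle ▸ ht)]
    refine ⟨.inl ⟨P.eraseElem hx, ?_⟩, Subtype.ext hP'⟩
    rw [← hP'] at hP
    rwa [insertSingleton, card_extend, add_left_inj] at hP
  · have hQ : (P.eraseElem hx).parts = insert ((P.part x).erase x) (P.parts.erase (P.part x)) := by
      rw [eraseElem_parts, avoid_singleton_parts P ht hxt hsingle]
    have hb : (P.part x).erase x ∈ (P.eraseElem hx).parts := hQ ▸ mem_insert_self _ _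
    have hnotin : (P.part x).erase x ∉ P.parts.erase (P.part x) := by
      intro h
      obtain ⟨hne, hmem⟩ := mem_erase.1 h
      obtain ⟨y, hy⟩ := P.nonempty_of_mem_parts hmem
      exact hne (P.eq_of_mem_parts hmem ht hy (mem_of_mem_erase hy))
    have hP' : (P.eraseElem hx).insertIntoPart hx hb = P := by
      ext1
      rw [insertIntoPart_parts, insert_erase hxt, hQ, erase_insert hnotin, insert_erase ht]
    refine ⟨.inr ⟨⟨P.eraseElem hx, ?_⟩, _, hb⟩, Subtype.ext hP'⟩
    rwa [← hP', card_insertIntoPart] at hP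

theorem natCard_insert (hx : x ∉ s) (k : ℕ) :
    Nat.card {P : Finpartition (insert x s) // #P.parts = k + 1} =
      (k + 1) * Nat.card {Q : Finpartition s // #Q.parts = k + 1} +
        Nat.card {Q : Finpartition s // #Q.parts = k} := by
  rw [← Nat.card_congr
      (Equiv.ofBijective _ ⟨insertElem_injective hx k, insertElem_surjective hx k⟩),
    Nat.card_sum, Nat.card_sigma, add_comm]
  have hparts (Q : {Q : Finpartition s // #Q.parts = k + 1}) : Nat.card Q.1.parts = k + 1 := by
    rw [Nat.card_eq_finsetCard, Q.2]
  rw [Fintype.sum_congr _ _ hparts, sum_const, card_univ, ← Nat.card_eq_fintype_card,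
    smul_eq_mul, mul_comm]

theorem natCard_eq_stirlingSecond (s : Finset α) (k : ℕ) :
    Nat.card {P : Finpartition s // #P.parts = k} = Nat.stirlingSecond #s k := by
  induction s using Finset.induction_on generalizing k with
  | empty =>
    have hparts (P : Finpartition (∅ : Finset α)) : P.parts = ∅ := P.parts_eq_empty_iff.2 rfl
    cases k with
    | zero =>
      have : Unique {P : Finpartition (∅ : Finset α) // #P.parts = 0} :=
        ⟨⟨⟨Finpartition.empty (Finset α), rfl⟩⟩,
          fun P => Subtype.ext (Finpartition.ext (by rw [hparts, hparts]))⟩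
      rw [Nat.card_unique, card_empty, Nat.stirlingSecond_zero]
    | succ k => simp [hparts]
  | insert x s hx ih =>
    cases k with
    | zero =>
      have : IsEmpty {P : Finpartition (insert x s) // #P.parts = 0} :=
        ⟨fun P => (card_pos.2 (P.1.parts_nonempty (insert_ne_empty x s))).ne' P.2⟩
      rw [Nat.card_of_isEmpty, card_insert_of_notMem hx, Nat.stirlingSecond_succ_zero]
    | succ k =>
      rw [natCard_insert hx, ih, ih, card_insert_of_notMem hx,
        Nat.stirlingSecond_succ_succ]

end Finpartition

def numAvoiding (T : Finset ℕ) (n : ℕ) : ℕ := ∏ i ∈ range n, #(range (i + 1) \ T)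

theorem card_inversionSeq_avoiding (n : ℕ) (T : Finset ℕ) :
    Nat.card {x : Fin n → ℕ // (∀ i, x i ≤ (i : ℕ)) ∧ ∀ i, x i ∉ T} = numAvoiding T n := by
  have e : {x : Fin n → ℕ // (∀ i, x i ≤ (i : ℕ)) ∧ ∀ i, x i ∉ T} ≃
      ∀ i : Fin n, (range (i + 1) \ T : Finset ℕ) :=
    (Equiv.subtypeEquivRight (q := fun x => ∀ i : Fin n, x i ∈ range (i + 1) \ T) fun x => by
      simp only [← forall_and, mem_sdiff, mem_range, Nat.lt_succ_iff]).trans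
      Equiv.subtypePiEquivPi
  rw [Nat.card_congr e, Nat.card_pi, numAvoiding, ← Fin.prod_univ_eq_prod_range]
  simp only [Nat.card_eq_finsetCard]

section numAvoiding

variable {T : Finset ℕ} {m n : ℕ}

theorem numAvoiding_empty (n : ℕ) : numAvoiding ∅ n = n ! := by
  simp only [numAvoiding, sdiff_empty, card_range, prod_range_add_one_eq_factorial]

theorem numAvoiding_succ (hT : T ⊆ range (n + 1)) :
    numAvoiding T (n + 1) = numAvoiding T n * (n + 1 - #T) := by
  rw [numAvoiding, prod_range_succ, card_sdiff_of_subset hT, card_range]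
  rfl

theorem numAvoiding_insert_of_le (hnm : n ≤ m) : numAvoiding (insert m T) n = numAvoiding T n :=
  prod_congr rfl fun i hi => by
    rw [sdiff_insert_of_notMem (by simp only [mem_range] at hi ⊢; omega)]

theorem numAvoiding_mul_factorial (hT : T ⊆ range (m + 1)) (hTm : #T ≤ m) (hmn : m ≤ n) :
    numAvoiding T n * (m - #T)! = numAvoiding T m * (n - #T)! := by
  induction n, hmn using Nat.le_induction with
  | base => rfl
  | succ n hmn ih =>
    rw [numAvoiding_succ (hT.trans (range_subset_range.2 (by omega))), mul_right_comm, ih,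
      show n + 1 - #T = n - #T + 1 by omega, Nat.factorial_succ]
    ring

end numAvoiding

theorem insert_mem_powersetCard_range {S : Finset ℕ} {p c : ℕ}
    (hS : S ∈ (Icc 1 p).powersetCard c) :
    insert (p + 1) S ∈ (range (p + 2)).powersetCard (c + 1) := by
  obtain ⟨hsub, hcard⟩ := mem_powersetCard.1 hS
  refine mem_powersetCard.2 ⟨insert_subset (self_mem_range_succ _) ?_, ?_⟩
  · exact (hsub.trans (Icc_one_subset_range p)).trans (range_subset_range.2 (by omega))
  · rw [card_insert_of_notMem fun h => by simpa using (mem_Icc.1 (hsub h)).2, hcard]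

theorem factorial_mul_stirlingSecond_succ (n j : ℕ) :
    (j + 1)! * Nat.stirlingSecond (n + 1) (j + 1) =
      (j ! * Nat.stirlingSecond n j + (j + 1)! * Nat.stirlingSecond n (j + 1)) * (j + 1) := by
  rw [Nat.stirlingSecond_succ_succ, Nat.factorial_succ]
  ring

theorem sum_numAvoiding_powersetCard (p c : ℕ) :
    ∑ S ∈ (Icc 1 p).powersetCard c, numAvoiding S (p + 1) =
      (p + 1 - c)! * Nat.stirlingSecond (p + 1) (p + 1 - c) := by
  induction p generalizing c with
  | zero => cases c <;> simp [numAvoiding, Nat.stirlingSecond_self]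
  | succ p ih =>
    cases c with
    | zero => simp [numAvoiding_empty, Nat.stirlingSecond_self]
    | succ c =>
      have h₁ : ∀ S ∈ (Icc 1 p).powersetCard (c + 1),
          numAvoiding S (p + 2) = numAvoiding S (p + 1) * (p + 1 - c) := by
        intro S hS
        obtain ⟨hsub, hcard⟩ := mem_powersetCard.1 hS
        rw [numAvoiding_succ ((hsub.trans (Icc_one_subset_range p)).trans
          (range_subset_range.2 (by omega))), hcard, Nat.add_sub_add_right]
      have h₂ : ∀ S ∈ (Icc 1 p).powersetCard c,
          numAvoiding (insert (p + 1) S) (p + 2) = numAvoiding S (p + 1) * (p + 1 - c) := by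
        intro S hS
        obtain ⟨hsub, hcard⟩ := mem_powersetCard.1 (insert_mem_powersetCard_range hS)
        rw [numAvoiding_succ hsub, numAvoiding_insert_of_le le_rfl, hcard, Nat.add_sub_add_right]
      rw [← insert_Icc_right_eq_Icc_add_one (by omega : 1 ≤ p + 1),
        sum_powersetCard_succ_insert (by simp), sum_congr rfl h₁, sum_congr rfl h₂, ← sum_mul,
        ← sum_mul, ih, ih, ← add_mul]
      rcases le_or_gt c p with hcp | hpc
      · obtain ⟨j, rfl⟩ := Nat.exists_eq_add_of_le hcp
        rw [show c + j + 1 - (c + 1) = j by omega, show c + j + 1 - c = j + 1 by omega,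
          show c + j + 1 + 1 - (c + 1) = j + 1 by omega]
        exact (factorial_mul_stirlingSecond_succ _ j).symm
      · rw [show p + 1 - c = 0 by omega, show p + 1 + 1 - (c + 1) = 0 by omega, mul_zero,
          Nat.stirlingSecond_succ_zero, mul_zero]

theorem stirlingSecond_eq_natStirlingSecond (n k : ℕ) :
    stirlingSecond n k = Nat.stirlingSecond n k := by
  rw [stirlingSecond, Finpartition.natCard_eq_stirlingSecond, card_univ, Fintype.card_fin]

-- `x i` for `i : Fin n` is the paper's `x_{i+1}`, hence the bound `x i ≤ i`.
/-- for `1 ≤ k ≤ m ≤ n`, summing over all `T ⊆ {1,…,m}` with `|T| = k` and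
`m ∈ T` the number of inversion sequences of size `n` avoiding all values in `T` gives
`(m − k + 1) · S(m, m − k + 1) · (n − k)!`.  Inversion sequences of size `n` are encoded
as `x : Fin n → ℕ` with `x i ≤ i` (the `0`-indexed form of `x_i ≤ i − 1`). -/
theorem stmt_11 (m k n : ℕ) (hk : 1 ≤ k) (hkm : k ≤ m) (hmn : m ≤ n) :
    ∑ T ∈ (Finset.Icc 1 m).powerset.filter (fun T => T.card = k ∧ m ∈ T),
        Nat.card {x : Fin n → ℕ // (∀ i, x i ≤ (i : ℕ)) ∧ ∀ i, x i ∉ T} =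
      (m - k + 1) * stirlingSecond m (m - k + 1) * Nat.factorial (n - k) := by
  obtain ⟨c, rfl⟩ := Nat.exists_eq_add_of_le' hk
  obtain ⟨p, rfl⟩ : ∃ p, m = p + 1 := ⟨m - 1, by omega⟩
  have hp : p + 1 ∉ Icc 1 p := by simp
  simp only [card_inversionSeq_avoiding]
  rw [← insert_Icc_right_eq_Icc_add_one (by omega : 1 ≤ p + 1),
    filter_powerset_insert_card_mem hp, sum_image_insert_powersetCard hp,
    stirlingSecond_eq_natStirlingSecond]
  refine Nat.eq_of_mul_eq_mul_right (Nat.factorial_pos (p - c)) ?_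
  calc (∑ S ∈ (Icc 1 p).powersetCard c, numAvoiding (insert (p + 1) S) n) * (p - c)!
      = (∑ S ∈ (Icc 1 p).powersetCard c, numAvoiding S (p + 1)) * (n - (c + 1))! := by
        simp only [sum_mul]
        refine sum_congr rfl fun S hS => ?_
        obtain ⟨hsub, hcard⟩ := mem_powersetCard.1 (insert_mem_powersetCard_range hS)
        have h := numAvoiding_mul_factorial (m := p + 1) hsub (by omega) hmn
        rwa [hcard, Nat.add_sub_add_right, numAvoiding_insert_of_le le_rfl] at h
    _ = (p + 1 - (c + 1) + 1) * Nat.stirlingSecond (p + 1) (p + 1 - (c + 1) + 1) *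
          (n - (c + 1))! * (p - c)! := by
        rw [sum_numAvoiding_powersetCard, show p + 1 - (c + 1) + 1 = p - c + 1 by omega,
          show p + 1 - c = p - c + 1 by omega, Nat.factorial_succ]
        ring
end

section
/- Let f(n) be the number of Dyck paths of semilength n having no peak at height 1 (equivalently, Dyck paths with mex 1, i.e., Dyck paths with no hills). Then in ℤ⟦X⟧ one has (1 + X − X·C(X)) · Σ_{n≥0} f(n) X^n = 1; that is, the generating function of Dyck paths with mex 1 is 1/(1 + x − xC(x)), the generating function of the Fine numbers. -/
open DyckStep

/-- A Dyck word `p` has a peak at height `h`: an up-step immediately followed by a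
down-step, such that the prefix ending with that up-step has `h` more `U`s than `D`s. -/
def DyckWord.HasPeakAtHeight (p : DyckWord) (h : ℕ) : Prop :=
  ∃ i, i + 1 < p.toList.length ∧ p.toList.getD i D = U ∧ p.toList.getD (i + 1) U = D ∧
    (p.toList.take (i + 1)).count U = (p.toList.take (i + 1)).count D + h

/-- The generating function of the Catalan numbers, `C(X) = Σ_{n≥0} catalan(n) Xⁿ`. -/
noncomputable def catalanGF : PowerSeries ℤ :=
  PowerSeries.mk fun n => (catalan n : ℤ)

/-!
First-return decomposition: a nonempty Dyck path is `U q D r` with Dyck paths `q` and `r`, and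
its hills are the hill `U D` when `q` is empty together with the hills of `r`. So a hill-free path
of semilength `n + 1` is the same as a pair of a nonempty path `q` and a hill-free path `r` with
`|q| + |r| = n`, i.e. `F = 1 + X (C - 1) F`, which rearranges to `(1 + X - X C) F = 1`.
-/

open Finset in
theorem Nat.card_subtype_prod_add_eq {α β : Type*} (f : α → ℕ) (g : β → ℕ) (P : α → Prop)
    (Q : β → Prop) (n : ℕ) [∀ i, Finite {a // f a = i ∧ P a}] [∀ j, Finite {b // g b = j ∧ Q b}] :
    Nat.card {x : α × β // f x.1 + g x.2 = n ∧ P x.1 ∧ Q x.2} =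
      ∑ k ∈ antidiagonal n, Nat.card {a // f a = k.1 ∧ P a} * Nat.card {b // g b = k.2 ∧ Q b} := by
  let e : {x : α × β // f x.1 + g x.2 = n ∧ P x.1 ∧ Q x.2} ≃
      Σ k : antidiagonal n, {a // f a = k.1.1 ∧ P a} × {b // g b = k.1.2 ∧ Q b} :=
    { toFun x := ⟨⟨(f x.1.1, g x.1.2), mem_antidiagonal.mpr x.2.1⟩,
        ⟨x.1.1, rfl, x.2.2.1⟩, ⟨x.1.2, rfl, x.2.2.2⟩⟩
      invFun y := ⟨(y.2.1.1, y.2.2.1),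
        by rw [y.2.1.2.1, y.2.2.2.1]; exact mem_antidiagonal.mp y.1.2, y.2.1.2.2, y.2.2.2.2⟩
      left_inv x := rfl
      right_inv := by
        rintro ⟨⟨⟨i, j⟩, hij⟩, ⟨a, hai, ha⟩, ⟨b, hbj, hb⟩⟩
        dsimp only at hai hbj
        subst hai hbj
        rfl }
  rw [Nat.card_congr e, Nat.card_sigma]
  simp only [Nat.card_prod]
  exact sum_coe_sort (antidiagonal n)
    fun k => Nat.card {a // f a = k.1 ∧ P a} * Nat.card {b // g b = k.2 ∧ Q b}

namespace DyckWord

open List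

lemma toList_add_nest_zero_add (a b : DyckWord) :
    (a + nest 0 + b).toList = a.toList ++ U :: D :: b.toList := by
  change a.toList ++ ([U] ++ [] ++ [D]) ++ b.toList = _
  simp

lemma hasPeakAtHeight_one_iff {p : DyckWord} :
    p.HasPeakAtHeight 1 ↔ ∃ a b : DyckWord, p = a + nest 0 + b := by
  constructor
  · rintro ⟨i, hlen, hU, hD, hcnt⟩
    rw [getD_eq_getElem _ _ (by omega)] at hU
    rw [getD_eq_getElem _ _ hlen] at hD
    have htake : p.toList.take (i + 1) = p.toList.take i ++ [U] := by
      rw [take_add_one, getElem?_eq_getElem (by omega), hU]; rfl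
    have htake' : p.toList.take (i + 2) = p.toList.take i ++ [U, D] := by
      rw [take_add_one, getElem?_eq_getElem hlen, hD, htake]; simp
    have hbal : (p.toList.take i).count U = (p.toList.take i).count D := by
      simp [htake] at hcnt; omega
    have hbal' : (p.toList.take (i + 2)).count U = (p.toList.take (i + 2)).count D := by
      simp [htake', hbal]
    refine ⟨p.take i hbal, p.drop (i + 2) hbal', DyckWord.ext ?_⟩
    rw [toList_add_nest_zero_add]
    conv_lhs => rw [← take_append_drop (i + 2) p.toList, htake']
    simp [take, drop]
  · rintro ⟨a, b, rfl⟩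
    refine ⟨a.toList.length, ?_, ?_, ?_, ?_⟩ <;>
      simp [toList_add_nest_zero_add, take_append, take_of_length_le, a.count_U_eq_count_D]

lemma nest_add_hasPeakAtHeight_one_iff (q r : DyckWord) :
    (q.nest + r).HasPeakAtHeight 1 ↔ q = 0 ∨ r.HasPeakAtHeight 1 := by
  simp only [hasPeakAtHeight_one_iff]
  constructor
  · rintro ⟨a, b, h⟩
    by_cases ha : a = 0
    · left
      simpa [ha] using congrArg insidePart h
    · right
      refine ⟨a.outsidePart, b, ?_⟩
      simpa [add_assoc, ha] using congrArg outsidePart h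
  · rintro (rfl | ⟨a, b, rfl⟩)
    · exact ⟨0, r, by simp⟩
    · exact ⟨q.nest + a, b, by simp [add_assoc]⟩

instance finite_semilength_eq_and (n : ℕ) (P : DyckWord → Prop) :
    Finite {p : DyckWord // p.semilength = n ∧ P p} :=
  Finite.of_equiv _ (Equiv.subtypeSubtypeEquivSubtypeInter (semilength · = n) P)

def hillFreeSuccEquiv (n : ℕ) :
    {p : DyckWord // p.semilength = n + 1 ∧ ¬ p.HasPeakAtHeight 1} ≃
      {x : DyckWord × DyckWord //
        x.1.semilength + x.2.semilength = n ∧ x.1 ≠ 0 ∧ ¬ x.2.HasPeakAtHeight 1} where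
  toFun p :=
    have hp : p.1 ≠ 0 := by rintro h; simpa [h] using p.2.1
    have hparts : ¬ (p.1.insidePart = 0 ∨ p.1.outsidePart.HasPeakAtHeight 1) := by
      rw [← nest_add_hasPeakAtHeight_one_iff, nest_insidePart_add_outsidePart hp]
      exact p.2.2
    ⟨(p.1.insidePart, p.1.outsidePart),
      by
        have := semilength_insidePart_add_semilength_outsidePart_add_one hp
        have := p.2.1
        dsimp only
        omega,
      not_or.mp hparts⟩
  invFun x := ⟨x.1.1.nest + x.1.2, by have := x.2.1; simp; omega,
    by simp [nest_add_hasPeakAtHeight_one_iff, x.2.2]⟩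
  left_inv p := Subtype.ext (nest_insidePart_add_outsidePart fun h => by simpa [h] using p.2.1)
  right_inv x := Subtype.ext (Prod.ext (by simp) (by simp))

open PowerSeries

lemma semilength_eq_zero_iff {p : DyckWord} : p.semilength = 0 ↔ p = 0 := by
  rw [← toList_eq_nil, ← List.length_eq_zero_iff, ← two_mul_semilength_eq_length]
  omega

lemma card_hillFree_zero :
    Nat.card {p : DyckWord // p.semilength = 0 ∧ ¬ p.HasPeakAtHeight 1} = 1 := by
  have : Unique {p : DyckWord // p.semilength = 0 ∧ ¬ p.HasPeakAtHeight 1} :=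
    { default := ⟨0, rfl, by simp [hasPeakAtHeight_one_iff, eq_comm (a := (0 : DyckWord))]⟩
      uniq p := Subtype.ext (semilength_eq_zero_iff.mp p.2.1) }
  exact Nat.card_unique

lemma coeff_catalanGF_sub_one (i : ℕ) :
    coeff i (catalanGF - 1) = (Nat.card {q : DyckWord // q.semilength = i ∧ q ≠ 0} : ℤ) := by
  rcases i with _ | i
  · have : IsEmpty {q : DyckWord // q.semilength = 0 ∧ q ≠ 0} :=
      ⟨fun q => q.2.2 (semilength_eq_zero_iff.mp q.2.1)⟩
    simp [map_sub, catalanGF, coeff_one]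
  · have : ∀ q : DyckWord, q.semilength = i + 1 ∧ q ≠ 0 ↔ q.semilength = i + 1 := fun q =>
      ⟨And.left, fun h => ⟨h, fun hq => by simp [hq] at h⟩⟩
    rw [Nat.card_congr (Equiv.subtypeEquivRight this), Nat.card_eq_fintype_card,
      card_dyckWord_semilength_eq_catalan]
    simp [map_sub, catalanGF, coeff_one]

noncomputable def hillFreeGF : PowerSeries ℤ :=
  PowerSeries.mk fun n => (Nat.card {p : DyckWord // p.semilength = n ∧ ¬ p.HasPeakAtHeight 1} : ℤ)

theorem hillFreeGF_eq : hillFreeGF = 1 + X * ((catalanGF - 1) * hillFreeGF) := by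
  ext (_ | n)
  · simp [hillFreeGF, card_hillFree_zero]
  · rw [map_add, coeff_succ_X_mul, coeff_mul, coeff_one, if_neg n.succ_ne_zero, zero_add]
    simp only [hillFreeGF, coeff_mk, coeff_catalanGF_sub_one]
    rw [Nat.card_congr (hillFreeSuccEquiv n), Nat.card_subtype_prod_add_eq semilength semilength
      (· ≠ 0) (¬ ·.HasPeakAtHeight 1)]
    push_cast
    rfl

end DyckWord

/-- if `f n` is the number of Dyck paths of semilength `n` with no peak at
height 1 (no hills, i.e. mex 1), then `(1 + X − X·C(X)) · Σ f(n) Xⁿ = 1` in `ℤ⟦X⟧`. -/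
theorem stmt_15 :
    (1 + (PowerSeries.X : PowerSeries ℤ) - PowerSeries.X * catalanGF) *
        PowerSeries.mk
          (fun n =>
            (Nat.card {p : DyckWord // p.semilength = n ∧ ¬ p.HasPeakAtHeight 1} : ℤ)) =
      1 := by
  change (1 + PowerSeries.X - PowerSeries.X * catalanGF) * DyckWord.hillFreeGF = 1
  linear_combination DyckWord.hillFreeGF_eq
end
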